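/- arXiv:2206.00186 — 5 statements merged into one kernel-verified Lean document; each statement's English description precedes it below -/
import Mathlib

section
/- Let k ≥ 0 and let G be a graph with independence number at most 2, |V(G)| = 3k, and clique number ω(G) ≤ k. Then for every set X ⊆ V(G) with |X| < k, the graph G − X is connected; in particular G is k-connected. -/
/-- If `G` has independence number at most 2, `|V(G)| = 3k` and `ω(G) ≤ k`, then for
every set `X` of fewer than `k` vertices the graph `G - X` is connected; in particular
`G` is `k`-connected. -/
theorem stmt_3 {V : Type*} [Fintype V] [DecidableEq V]
    (G : SimpleGraph V) (k : ℕ)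
    (hα : ∀ s : Finset V, (∀ u ∈ s, ∀ w ∈ s, u ≠ w → ¬ G.Adj u w) → s.card ≤ 2)
    (hn : Fintype.card V = 3 * k)
    (hω : ∀ s : Finset V, G.IsClique (s : Set V) → s.card ≤ k) :
    ∀ X : Finset V, X.card < k → (G.induce ((X : Set V)ᶜ)).Connected := by
  classical
  intro X hX
  -- key: common neighbor for non-adjacent vertices outside X
  have key : ∀ u v : V, u ∉ X → v ∉ X → u ≠ v → ¬ G.Adj u v →
      ∃ w : V, w ∉ X ∧ G.Adj u w ∧ G.Adj v w := by
    intro u v hu hv huv hadj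
    by_contra hcon
    push_neg at hcon
    set A : Finset V := Finset.univ.filter (fun w => w ∉ X ∧ (w = u ∨ G.Adj u w)) with hAdef
    set B : Finset V := Finset.univ.filter (fun w => w ∉ X ∧ ¬(w = u ∨ G.Adj u w)) with hBdef
    have hAv : ∀ a ∈ A, a ≠ v ∧ ¬ G.Adj a v := by
      intro a ha
      rw [hAdef, Finset.mem_filter] at ha
      obtain ⟨-, haX, hau⟩ := ha
      rcases hau with rfl | hau
      · exact ⟨huv, hadj⟩
      · refine ⟨?_, fun h => hcon a haX hau h.symm⟩
        rintro rfl; exact hadj hau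
    have hAcl : G.IsClique (A : Set V) := by
      intro a ha a' ha' hne
      simp only [hAdef, Finset.coe_filter, Set.mem_setOf_eq] at ha ha'
      by_contra hnadj
      have h3 : ({a, a', v} : Finset V).card ≤ 2 := by
        apply hα
        intro x hx y hy hxy
        simp only [Finset.mem_insert, Finset.mem_singleton] at hx hy
        obtain ⟨hav, hanv⟩ := hAv a (by rw [hAdef, Finset.mem_filter]; exact ⟨Finset.mem_univ _, ha.2⟩)
        obtain ⟨hav', hanv'⟩ := hAv a' (by rw [hAdef, Finset.mem_filter]; exact ⟨Finset.mem_univ _, ha'.2⟩)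
        rcases hx with rfl | rfl | rfl <;> rcases hy with rfl | rfl | rfl <;>
          first
          | exact absurd rfl hxy
          | exact hnadj
          | exact fun h => hnadj h.symm
          | exact hanv
          | exact hanv'
          | exact fun h => hanv h.symm
          | exact fun h => hanv' h.symm
      have hcard : ({a, a', v} : Finset V).card = 3 := by
        obtain ⟨hav, -⟩ := hAv a (by rw [hAdef, Finset.mem_filter]; exact ⟨Finset.mem_univ _, ha.2⟩)
        obtain ⟨hav', -⟩ := hAv a' (by rw [hAdef, Finset.mem_filter]; exact ⟨Finset.mem_univ _, ha'.2⟩)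
        rw [Finset.card_insert_of_notMem (by simp [hne, hav]),
          Finset.card_insert_of_notMem (by simp [hav']), Finset.card_singleton]
      omega
    have hBcl : G.IsClique (B : Set V) := by
      intro b hb b' hb' hne
      simp only [hBdef, Finset.coe_filter, Set.mem_setOf_eq] at hb hb'
      push_neg at hb hb'
      by_contra hnadj
      have h3 : ({b, b', u} : Finset V).card ≤ 2 := by
        apply hα
        intro x hx y hy hxy
        simp only [Finset.mem_insert, Finset.mem_singleton] at hx hy
        rcases hx with rfl | rfl | rfl <;> rcases hy with rfl | rfl | rfl <;>
          first
          | exact absurd rfl hxy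
          | exact hnadj
          | exact fun h => hnadj h.symm
          | exact fun h => hb.2.2.2 h.symm
          | exact fun h => hb'.2.2.2 h.symm
          | exact hb.2.2.2
          | exact hb'.2.2.2
      have hcard : ({b, b', u} : Finset V).card = 3 := by
        rw [Finset.card_insert_of_notMem (by simp [hne, hb.2.2.1]),
          Finset.card_insert_of_notMem (by simp [hb'.2.2.1]), Finset.card_singleton]
      omega
    have hAk := hω A hAcl
    have hBk := hω B hBcl
    have hdisj : Disjoint A B := by
      rw [Finset.disjoint_left]
      intro x hx hx'
      rw [hAdef, Finset.mem_filter] at hx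
      rw [hBdef, Finset.mem_filter] at hx'
      exact hx'.2.2 hx.2.2
    have hunion : A ∪ B = Xᶜ := by
      ext x
      simp only [Finset.mem_union, hAdef, hBdef, Finset.mem_filter, Finset.mem_univ,
        true_and, Finset.mem_compl]
      tauto
    have hcardc : (Xᶜ : Finset V).card = Fintype.card V - X.card := Finset.card_compl X
    have := Finset.card_union_of_disjoint hdisj
    rw [hunion, hcardc, hn] at this
    omega
  rw [SimpleGraph.connected_iff]
  constructor
  · rintro ⟨u, hu⟩ ⟨v, hv⟩
    rw [Set.mem_compl_iff, Finset.mem_coe] at hu hv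
    by_cases huv : u = v
    · subst huv; rfl
    by_cases hadj : G.Adj u v
    · exact SimpleGraph.Adj.reachable (by exact hadj)
    · obtain ⟨w, hw, huw, hvw⟩ := key u v hu hv huv hadj
      have h1 : (G.induce ((X : Set V)ᶜ)).Adj ⟨u, by simpa using hu⟩ ⟨w, by simpa using hw⟩ := huw
      have h2 : (G.induce ((X : Set V)ᶜ)).Adj ⟨w, by simpa using hw⟩ ⟨v, by simpa using hv⟩ := hvw.symm
      exact h1.reachable.trans h2.reachable
  · have hpos : 0 < (Xᶜ : Finset V).card := by
      rw [Finset.card_compl, hn]; omega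
    obtain ⟨x, hx⟩ := Finset.card_pos.mp hpos
    exact ⟨⟨x, by simpa using hx⟩⟩
end

section
/- Let G be a graph with independence number at most 2, |V(G)| = 3k, and ω(G) ≤ k. Then the complement of G contains a matching of size k. -/
/-!
Build the matching greedily in `Gᶜ`. A matching with `m < k` edges leaves `3k - 2m ≥ k + 2`
vertices uncovered; these cannot form a clique of `G`, so two of them are adjacent in `Gᶜ` and the
matching extends by that edge.
-/

namespace SimpleGraph

variable {V : Type*} {H : SimpleGraph V} {M : H.Subgraph} {u w : V}

namespace Subgraph

lemma IsMatching.sup_subgraphOfAdj (hM : M.IsMatching) (huw : H.Adj u w)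
    (hu : u ∉ M.verts) (hw : w ∉ M.verts) : (M ⊔ H.subgraphOfAdj huw).IsMatching := by
  refine hM.sup (.subgraphOfAdj huw) ?_
  rw [hM.support_eq_verts, (IsMatching.subgraphOfAdj huw).support_eq_verts, subgraphOfAdj_verts]
  exact Set.disjoint_insert_right.mpr ⟨hu, Set.disjoint_singleton_right.mpr hw⟩

lemma ncard_edgeSet_sup_subgraphOfAdj [Finite V] (huw : H.Adj u w) (hu : u ∉ M.verts) :
    (M ⊔ H.subgraphOfAdj huw).edgeSet.ncard = M.edgeSet.ncard + 1 := by
  have hnew : s(u, w) ∉ M.edgeSet := fun he => hu (M.edge_vert he)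
  rw [edgeSet_sup, edgeSet_subgraphOfAdj, Set.union_singleton, Set.ncard_insert_of_notMem hnew]

lemma ncard_verts_sup_subgraphOfAdj [Finite V] (huw : H.Adj u w)
    (hu : u ∉ M.verts) (hw : w ∉ M.verts) :
    (M ⊔ H.subgraphOfAdj huw).verts.ncard = M.verts.ncard + 2 := by
  rw [verts_sup, subgraphOfAdj_verts, Set.ncard_union_eq, Set.ncard_pair huw.ne]
  exact Set.disjoint_insert_right.mpr ⟨hu, Set.disjoint_singleton_right.mpr hw⟩

end Subgraph

theorem exists_isMatching_ncard_edgeSet_eq [Finite V] {n : ℕ}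
    (h : ∀ s : Set V, H.IsIndepSet s → 2 * n + s.ncard ≤ Nat.card V) :
    ∃ M : H.Subgraph, M.IsMatching ∧ M.edgeSet.ncard = n := by
  suffices ∀ m ≤ n, ∃ M : H.Subgraph,
      M.IsMatching ∧ M.edgeSet.ncard = m ∧ M.verts.ncard = 2 * m from
    (this n le_rfl).imp fun _ ⟨hM, he, _⟩ => ⟨hM, he⟩
  intro m
  induction m with
  | zero => exact fun _ => ⟨⊥, fun _ hv => hv.elim, by simp, by simp⟩
  | succ m ih =>
    intro hm
    obtain ⟨M, hM, he, hv⟩ := ih (by omega)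
    have hnot_indep : ¬H.IsIndepSet M.vertsᶜ := fun hind => by
      have := h _ hind
      rw [Set.ncard_compl, hv] at this
      omega
    obtain ⟨u, hu, w, hw, -, huw⟩ :
        ∃ u ∈ M.vertsᶜ, ∃ w ∈ M.vertsᶜ, u ≠ w ∧ H.Adj u w := by
      simpa [IsIndepSet, Set.Pairwise] using hnot_indep
    refine ⟨_, hM.sup_subgraphOfAdj huw hu hw, ?_, ?_⟩
    · rw [Subgraph.ncard_edgeSet_sup_subgraphOfAdj huw hu, he]
    · rw [Subgraph.ncard_verts_sup_subgraphOfAdj huw hu hw, hv]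
      ring

end SimpleGraph

theorem stmt_6_general {V : Type*} [Fintype V]
    (G : SimpleGraph V) (k : ℕ)
    (hn : Fintype.card V = 3 * k)
    (hω : ∀ s : Finset V, G.IsClique (s : Set V) → s.card ≤ k) :
    ∃ M : SimpleGraph.Subgraph Gᶜ, M.IsMatching ∧ M.edgeSet.ncard = k := by
  classical
  refine Gᶜ.exists_isMatching_ncard_edgeSet_eq fun s hs => ?_
  have hclique : G.IsClique (s.toFinset : Set V) := by simpa using hs
  have := hω _ hclique
  rw [Nat.card_eq_fintype_card, hn, Set.ncard_eq_toFinset_card']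
  omega

/-- If `G` has independence number at most 2, `|V(G)| = 3k` and `ω(G) ≤ k`, then the
complement of `G` contains a matching of size `k` (i.e. `k` pairwise disjoint edges). -/
theorem stmt_6 {V : Type*} [Fintype V] [DecidableEq V]
    (G : SimpleGraph V) (k : ℕ)
    (hα : ∀ s : Finset V, (∀ u ∈ s, ∀ w ∈ s, u ≠ w → ¬ G.Adj u w) → s.card ≤ 2)
    (hn : Fintype.card V = 3 * k)
    (hω : ∀ s : Finset V, G.IsClique (s : Set V) → s.card ≤ k) :
    ∃ M : SimpleGraph.Subgraph Gᶜ, M.IsMatching ∧ M.edgeSet.ncard = k :=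
  stmt_6_general G k hn hω
end

section
/- Let X be a finite set of even cardinality |X| ≥ 4, let M be a uniformly random partition of X into pairs, and let F be any set of 2-element subsets of X. Then for every λ > 0, the probability that | |F ∩ M| − |F|/(|X| − 1) | ≥ λ is at most |X|/λ². -/
open ProbabilityTheory

/-- `M` is a partition of the (finite) vertex type `V` into pairs. -/
def IsPerfectPairing {V : Type*} (M : Finset (Finset V)) : Prop :=
  (∀ p ∈ M, p.card = 2) ∧ ∀ v : V, ∃! p, p ∈ M ∧ v ∈ p

/-!
Chebyshev's inequality, with the variance of `|F ∩ M|` computed exactly. Write `n = |X|` and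
`m = |F|`. The symmetric group of `X` permutes the perfect pairings and acts transitively on pairs,
and on pairs disjoint from a fixed pair; since every point lies in exactly one block, a given pair
is a block of a fraction `1/(n-1)` of all pairings, and two given disjoint pairs are both blocks
of a fraction `1/((n-1)(n-3))`. Hence `E|F ∩ M| = m/(n-1)` and
`E|F ∩ M|² = m/(n-1) + K/((n-1)(n-3))`, where `K` counts the ordered pairs of disjoint members
of `F`. Counting pairs of members of `F` through their common points gives
`K = m² + m - ∑ᵥ deg(v)²`, and `∑ᵥ deg(v)² ≥ 4m²/n` by Cauchy–Schwarz, so the variance is at most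
`m(n-2)/((n-1)(n-3)) ≤ n` because `2m ≤ n(n-1)`.
-/

open Finset Equiv
open scoped Pointwise

lemma exists_perm_smul_finset_eq {α : Type*} [DecidableEq α] {s t : Finset α}
    (h : #s = #t) : ∃ σ : Perm α, σ • s = t := by
  have := Set.powersetCard.isPretransitive (α := α) (n := #t)
  obtain ⟨σ, hσ⟩ := MulAction.exists_smul_eq (Perm α)
    (⟨s, h⟩ : Set.powersetCard α #t) ⟨t, rfl⟩
  exact ⟨σ, congrArg Subtype.val hσ⟩

lemma exists_perm_smul_finset_eq_of_disjoint {α : Type*} [DecidableEq α]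
    {s t u : Finset α} (hs : Disjoint s u) (ht : Disjoint t u) (h : #s = #t) :
    ∃ σ : Perm α, σ • s = t ∧ ∀ x ∈ u, σ x = x := by
  have hsub : ∀ {r : Finset α}, Disjoint r u →
      (r.subtype (· ∉ u)).map (Function.Embedding.subtype _) = r :=
    fun hr => subtype_map_of_mem fun x hx => disjoint_left.1 hr hx
  obtain ⟨τ, hτ⟩ := exists_perm_smul_finset_eq (s := s.subtype (· ∉ u)) (t := t.subtype (· ∉ u))
    (by rw [← card_map, hsub hs, ← card_map (Function.Embedding.subtype _), hsub ht, h])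
  refine ⟨Perm.ofSubtype τ, ?_, fun x hx => Perm.ofSubtype_apply_of_not_mem τ (not_not.2 hx)⟩
  rw [← hsub hs, ← hsub ht, ← hτ]
  ext x
  simp only [mem_map, mem_smul_finset, mem_subtype, Perm.smul_def, Function.Embedding.subtype_apply]
  constructor
  · rintro ⟨-, ⟨z, hz, rfl⟩, rfl⟩
    exact ⟨τ z, ⟨z, hz, rfl⟩, (Perm.ofSubtype_apply_of_mem τ z.2).symm⟩
  · rintro ⟨-, ⟨z, hz, rfl⟩, rfl⟩
    exact ⟨z, ⟨z, hz, rfl⟩, Perm.ofSubtype_apply_of_mem τ z.2⟩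

lemma Finset.sum_card_bipartiteBelow_sq {α β : Type*} (s : Finset α) (t : Finset β)
    (r : α → β → Prop) [∀ a b, Decidable (r a b)] :
    ∑ b ∈ t, #(s.bipartiteBelow r b) ^ 2 = ∑ a ∈ s, ∑ a' ∈ s, #{b ∈ t | r a b ∧ r a' b} := by
  have := sum_card_bipartiteAbove_eq_sum_card_bipartiteBelow (s := s ×ˢ s) (t := t)
    (r := fun p b => r p.1 b ∧ r p.2 b)
  simp only [bipartiteAbove, bipartiteBelow] at this ⊢
  rw [← sum_product' (f := fun a a' => #{b ∈ t | r a b ∧ r a' b}), this]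
  refine sum_congr rfl fun b _ => ?_
  rw [sq, ← card_product, ← filter_product]

lemma card_filter_le_abs_mul_sq_le_sum_sq {ι : Type*} (s : Finset ι) (g : ι → ℝ) {c : ℝ}
    (hc : 0 ≤ c) : #{i ∈ s | c ≤ |g i|} * c ^ 2 ≤ ∑ i ∈ s, g i ^ 2 := by
  calc #{i ∈ s | c ≤ |g i|} * c ^ 2 = ∑ i ∈ s with c ≤ |g i|, c ^ 2 := by
        rw [sum_const, nsmul_eq_mul]
    _ ≤ ∑ i ∈ s with c ≤ |g i|, g i ^ 2 :=
        sum_le_sum fun i hi => sq_abs (g i) ▸ pow_le_pow_left₀ hc (mem_filter.1 hi).2 2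
    _ ≤ ∑ i ∈ s, g i ^ 2 := sum_le_sum_of_subset_of_nonneg (filter_subset _ _)
        fun i _ _ => sq_nonneg (g i)

-- With `n = |X|`, `m = |F|`, `K` the number of ordered pairs of disjoint members of `F` and
-- `D = ∑ᵥ deg(v)²`, the left side is the variance of `|F ∩ M|`.
lemma div_add_div_sub_div_sq_le {n m K D : ℝ} (hn : 4 ≤ n) (hmn : 2 * m ≤ n * (n - 1))
    (hKD : K + D = m ^ 2 + m) (hD : (2 * m) ^ 2 ≤ n * D) :
    m / (n - 1) + K / ((n - 1) * (n - 3)) - (m / (n - 1)) ^ 2 ≤ n := by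
  have h1 : 0 < n - 1 := by linarith
  have h3 : 0 < n - 3 := by linarith
  have hK : K * n ≤ (m ^ 2 + m) * n - 4 * m ^ 2 := by nlinarith
  rw [show m / (n - 1) + K / ((n - 1) * (n - 3)) - (m / (n - 1)) ^ 2
      = (m * (n - 1) * (n - 3) + K * (n - 1) - m ^ 2 * (n - 3)) / ((n - 1) ^ 2 * (n - 3)) by
        field_simp, div_le_iff₀ (by positivity)]
  refine le_of_mul_le_mul_right ?_ (by linarith : 0 < n)
  nlinarith [mul_le_mul_of_nonneg_right hK h1.le,
    mul_nonneg (sq_nonneg m) (by linarith : 0 ≤ n - 2),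
    mul_nonneg (by linarith : 0 ≤ n * (n - 1) - 2 * m) (mul_nonneg h1.le (by linarith : 0 ≤ n - 2)),
    mul_nonneg (mul_nonneg (by linarith : 0 ≤ n) (sq_nonneg (n - 1))) (by linarith : 0 ≤ n - 4)]

namespace IsPerfectPairing

variable {V : Type*} {M : Finset (Finset V)}

lemma eq_of_mem_of_mem (hM : IsPerfectPairing M) {p q : Finset V} (hp : p ∈ M) (hq : q ∈ M)
    {v : V} (hvp : v ∈ p) (hvq : v ∈ q) : p = q :=
  (hM.2 v).unique ⟨hp, hvp⟩ ⟨hq, hvq⟩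

lemma smul [DecidableEq V] (hM : IsPerfectPairing M) (σ : Perm V) :
    IsPerfectPairing (σ • M) := by
  refine ⟨fun p hp => ?_, fun v => ?_⟩
  · obtain ⟨q, hq, rfl⟩ := mem_smul_finset.1 hp
    rw [card_smul_finset, hM.1 q hq]
  · obtain ⟨p, ⟨hp, hvp⟩, -⟩ := hM.2 (σ⁻¹ • v)
    refine ⟨σ • p, ⟨smul_mem_smul_finset hp, ?_⟩, fun q ⟨hq, hvq⟩ => ?_⟩
    · rwa [← inv_smul_mem_iff]
    · rw [← inv_smul_mem_iff] at hq
      rw [← inv_smul_eq_iff]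
      exact hM.eq_of_mem_of_mem hq hp (smul_mem_smul_finset hvq) hvp

lemma smul_iff [DecidableEq V] (σ : Perm V) : IsPerfectPairing (σ • M) ↔ IsPerfectPairing M :=
  ⟨fun h => inv_smul_smul σ M ▸ h.smul σ⁻¹, fun h => h.smul σ⟩

end IsPerfectPairing

section Pairings

variable {V : Type*} [Fintype V]

variable (V) in
open scoped Classical in
noncomputable def perfectPairings : Finset (Finset (Finset V)) :=
  {M | IsPerfectPairing M}

@[simp]
lemma mem_perfectPairings {M : Finset (Finset V)} : M ∈ perfectPairings V ↔ IsPerfectPairing M := by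
  simp [perfectPairings]

variable [DecidableEq V]

noncomputable def pairingsContaining (S : Finset (Finset V)) : Finset (Finset (Finset V)) :=
  {M ∈ perfectPairings V | S ⊆ M}

lemma pairingsContaining_smul (σ : Perm V) (S : Finset (Finset V)) :
    pairingsContaining (σ • S) = σ • pairingsContaining S := by
  ext M
  rw [← inv_smul_mem_iff]
  simp only [pairingsContaining, mem_filter, mem_perfectPairings, IsPerfectPairing.smul_iff,
    smul_finset_subset_iff]

lemma card_pairingsContaining_insert_eq {S : Finset (Finset V)} {f g : Finset V}
    (hfg : #f = #g) (hf : Disjoint f (S.sup id)) (hg : Disjoint g (S.sup id)) :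
    #(pairingsContaining (insert f S)) = #(pairingsContaining (insert g S)) := by
  obtain ⟨σ, hσfg, hσu⟩ := exists_perm_smul_finset_eq_of_disjoint hf hg hfg
  have hσS : σ • S = S := by
    refine (smul_finset_def ..).trans ((image_congr fun q hq => ?_).trans image_id)
    refine (smul_finset_def ..).trans ((image_congr fun x hx => ?_).trans image_id)
    exact hσu x (le_sup (f := id) hq hx)
  have hσ : σ • insert f S = insert g S := by rw [smul_finset_insert, hσfg, hσS]
  rw [← hσ, pairingsContaining_smul, card_smul_finset]

def pairsThroughAvoiding (v : V) (u : Finset V) : Finset (Finset V) :=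
  {f | #f = 2 ∧ v ∈ f ∧ Disjoint f u}

lemma card_pairsThroughAvoiding {v : V} {u : Finset V} (hv : v ∉ u) :
    #(pairsThroughAvoiding v u) = Fintype.card V - (#u + 1) := by
  have himage : pairsThroughAvoiding v u = (insert v u)ᶜ.image fun w => {v, w} := by
    ext f
    simp only [pairsThroughAvoiding, mem_filter, mem_univ, true_and, mem_image, mem_compl,
      mem_insert, not_or]
    constructor
    · rintro ⟨hf, hvf, hfu⟩
      obtain ⟨w, hwv, rfl⟩ : ∃ w, w ≠ v ∧ f = {v, w} := by
        obtain ⟨a, b, hab, rfl⟩ := card_eq_two.1 hf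
        rcases mem_insert.1 hvf with rfl | hb
        · exact ⟨b, hab.symm, rfl⟩
        · obtain rfl := eq_of_mem_singleton hb
          exact ⟨a, hab, pair_comm _ _⟩
      exact ⟨w, ⟨hwv, disjoint_left.1 hfu (by simp)⟩, rfl⟩
    · rintro ⟨w, ⟨hwv, hwu⟩, rfl⟩
      refine ⟨card_pair (Ne.symm hwv), mem_insert_self _ _, ?_⟩
      simp [hv, hwu]
  rw [himage, card_image_of_injOn, card_compl, card_insert_of_notMem hv]
  intro w hw w' hw' h
  simp only [coe_compl, Set.mem_compl_iff, mem_coe, mem_insert, not_or] at hw hw'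
  have : w ∈ ({v, w'} : Finset V) := by
    rw [← show ({v, w} : Finset V) = {v, w'} from h]
    simp
  simpa [hw.1] using this

lemma filter_mem_pairingsContaining (S : Finset (Finset V)) (f : Finset V) :
    {M ∈ pairingsContaining S | f ∈ M} = pairingsContaining (insert f S) := by
  ext M
  simp only [pairingsContaining, mem_filter, insert_subset_iff]
  tauto

lemma sum_card_pairingsContaining_insert (S : Finset (Finset V)) {v : V} (hv : v ∉ S.sup id) :
    ∑ f ∈ pairsThroughAvoiding v (S.sup id), #(pairingsContaining (insert f S))
      = #(pairingsContaining S) := by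
  have hblock : ∀ M ∈ pairingsContaining S,
      #{f ∈ pairsThroughAvoiding v (S.sup id) | f ∈ M} = 1 := by
    intro M hM
    simp only [pairingsContaining, mem_filter, mem_perfectPairings] at hM
    obtain ⟨hM, hSM⟩ := hM
    obtain ⟨p, ⟨hp, hvp⟩, hpuniq⟩ := hM.2 v
    have hpS : Disjoint p (S.sup id) := by
      refine disjoint_left.2 fun x hxp hxS => hv ?_
      obtain ⟨q, hq, hxq⟩ := mem_sup.1 hxS
      rw [← hM.eq_of_mem_of_mem hp (hSM hq) hxp hxq] at hq
      exact mem_sup.2 ⟨p, hq, hvp⟩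
    refine card_eq_one.2 ⟨p, ext fun f => ?_⟩
    simp only [pairsThroughAvoiding, mem_filter, mem_univ, true_and, mem_singleton]
    exact ⟨fun ⟨⟨_, hvf, _⟩, hf⟩ => hpuniq f ⟨hf, hvf⟩,
      fun hfp => hfp ▸ ⟨⟨hM.1 p hp, hvp, hpS⟩, hp⟩⟩
  have := sum_card_bipartiteAbove_eq_sum_card_bipartiteBelow
    (s := pairsThroughAvoiding v (S.sup id)) (t := pairingsContaining S) (r := fun f M => f ∈ M)
  simp only [bipartiteAbove, bipartiteBelow, filter_mem_pairingsContaining] at this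
  rw [this, sum_congr rfl hblock, card_eq_sum_ones]

-- The pairings containing `S` are split according to the block through a point of `f`, and all
-- parts have the same size by symmetry.
lemma card_pairingsContaining_insert_mul {S : Finset (Finset V)} {f : Finset V} (hf : #f = 2)
    (hfS : Disjoint f (S.sup id)) :
    #(pairingsContaining (insert f S)) * (Fintype.card V - (#(S.sup id) + 1))
      = #(pairingsContaining S) := by
  obtain ⟨v, hvf⟩ := card_pos.1 (hf ▸ two_pos)
  have hv : v ∉ S.sup id := disjoint_left.1 hfS hvf
  rw [← sum_card_pairingsContaining_insert S hv, ← card_pairsThroughAvoiding hv, mul_comm,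
    ← smul_eq_mul, ← sum_const]
  refine sum_congr rfl fun g hg => ?_
  simp only [pairsThroughAvoiding, mem_filter, mem_univ, true_and] at hg
  exact card_pairingsContaining_insert_eq (hf.trans hg.1.symm) hfS hg.2.2

lemma card_pairingsContaining_insert {S : Finset (Finset V)} {f : Finset V} (hf : #f = 2)
    (hfS : Disjoint f (S.sup id)) :
    (#(pairingsContaining (insert f S)) : ℝ)
      = #(pairingsContaining S) / (Fintype.card V - (#(S.sup id) + 1)) := by
  have hcard : #(S.sup id) + 2 ≤ Fintype.card V := by
    simpa [card_union_of_disjoint hfS, hf, add_comm] using card_le_univ (f ∪ S.sup id)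
  have hpos : (0 : ℝ) < Fintype.card V - (#(S.sup id) + 1) := by
    have : ((#(S.sup id) + 2 : ℕ) : ℝ) ≤ Fintype.card V := by exact_mod_cast hcard
    push_cast at this
    linarith
  rw [eq_div_iff hpos.ne', ← card_pairingsContaining_insert_mul hf hfS, Nat.cast_mul,
    Nat.cast_sub (by omega)]
  push_cast
  ring

lemma pairingsContaining_empty :
    pairingsContaining (∅ : Finset (Finset V)) = perfectPairings V := by
  simp [pairingsContaining]

lemma card_pairingsContaining_singleton {e : Finset V} (he : #e = 2) :
    (#(pairingsContaining {e}) : ℝ) = #(perfectPairings V) / (Fintype.card V - 1) := by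
  simpa [pairingsContaining_empty] using
    card_pairingsContaining_insert (S := ∅) he (by simp)

lemma card_pairingsContaining_pair {e f : Finset V} (he : #e = 2) (hf : #f = 2)
    (hef : Disjoint e f) :
    (#(pairingsContaining {e, f}) : ℝ)
      = #(perfectPairings V) / ((Fintype.card V - 1) * (Fintype.card V - 3)) := by
  rw [card_pairingsContaining_insert (S := {f}) he (by simpa using hef),
    card_pairingsContaining_singleton hf, div_div]
  norm_num [hf]

lemma pairingsContaining_pair_eq_empty {e f : Finset V} (hne : e ≠ f) (hef : ¬Disjoint e f) :
    pairingsContaining {e, f} = ∅ := by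
  obtain ⟨x, hxe, hxf⟩ := not_disjoint_iff.1 hef
  refine filter_eq_empty_iff.2 fun M hM hefM => hne ?_
  rw [insert_subset_iff, singleton_subset_iff] at hefM
  exact (mem_perfectPairings.1 hM).eq_of_mem_of_mem hefM.1 hefM.2 hxe hxf

lemma sum_card_inter_perfectPairings {F : Finset (Finset V)} (hF : ∀ e ∈ F, #e = 2) :
    (∑ M ∈ perfectPairings V, (#(F ∩ M) : ℝ))
      = #(perfectPairings V) * (#F / (Fintype.card V - 1)) := by
  have hsingle : ∀ e ∈ F, (#{M ∈ perfectPairings V | e ∈ M} : ℝ)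
      = #(perfectPairings V) / (Fintype.card V - 1) := fun e he => by
    rw [← card_pairingsContaining_singleton (hF e he)]
    simp [pairingsContaining]
  have hcount := sum_card_bipartiteAbove_eq_sum_card_bipartiteBelow (s := F)
    (t := perfectPairings V) (r := fun e M => e ∈ M)
  simp only [bipartiteAbove, bipartiteBelow, filter_mem_eq_inter] at hcount
  rw [← Nat.cast_sum, ← hcount, Nat.cast_sum, sum_congr rfl hsingle, sum_const, nsmul_eq_mul]
  ring

lemma sum_card_inter_sq_perfectPairings {F : Finset (Finset V)} (hF : ∀ e ∈ F, #e = 2) :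
    (∑ M ∈ perfectPairings V, (#(F ∩ M) : ℝ) ^ 2)
      = #(perfectPairings V) * (#F / (Fintype.card V - 1)
          + #{p ∈ F ×ˢ F | Disjoint p.1 p.2} / ((Fintype.card V - 1) * (Fintype.card V - 3))) := by
  set N : ℝ := (#(perfectPairings V) : ℝ)
  set n : ℝ := (Fintype.card V : ℝ)
  have hpair : ∀ e ∈ F, ∀ f ∈ F, (#{M ∈ perfectPairings V | e ∈ M ∧ f ∈ M} : ℝ)
      = (if e = f then N / (n - 1) else 0)
        + if Disjoint e f then N / ((n - 1) * (n - 3)) else 0 := by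
    intro e he f hf
    have hP : {M ∈ perfectPairings V | e ∈ M ∧ f ∈ M} = pairingsContaining {e, f} := by
      simp [pairingsContaining, insert_subset_iff]
    rw [hP]
    by_cases hef : e = f
    · subst hef
      have hne : e ≠ ∅ := fun h => by simpa [h] using hF e he
      simp [hne, card_pairingsContaining_singleton (hF e he), N, n]
    · by_cases hd : Disjoint e f
      · simp [hef, hd, card_pairingsContaining_pair (hF e he) (hF f hf) hd, N, n]
      · simp [hef, hd, pairingsContaining_pair_eq_empty hef hd]
  have hcount : (∑ M ∈ perfectPairings V, (#(F ∩ M) : ℝ) ^ 2)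
      = ∑ e ∈ F, ∑ f ∈ F, (#{M ∈ perfectPairings V | e ∈ M ∧ f ∈ M} : ℝ) := by
    have := sum_card_bipartiteBelow_sq F (perfectPairings V) (fun e M => e ∈ M)
    simp only [bipartiteBelow, filter_mem_eq_inter] at this
    exact_mod_cast this
  rw [hcount, sum_congr rfl fun e he => sum_congr rfl (hpair e he)]
  simp only [sum_add_distrib, sum_ite_eq, ← sum_product' (f := fun e f =>
    if Disjoint e f then N / ((n - 1) * (n - 3)) else 0)]
  simp only [← sum_filter, sum_const, filter_mem_eq_inter, inter_self, nsmul_eq_mul]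
  ring

end Pairings

lemma two_mul_card_le {V : Type*} [Fintype V] {F : Finset (Finset V)} (hF : ∀ e ∈ F, #e = 2) :
    2 * (#F : ℝ) ≤ Fintype.card V * (Fintype.card V - 1) := by
  have : #F ≤ (Fintype.card V).choose 2 := by
    rw [← card_univ, ← card_powersetCard]
    exact card_le_card fun e he => mem_powersetCard.2 ⟨subset_univ e, hF e he⟩
  have := (Nat.cast_le (α := ℝ)).2 this
  rw [Nat.cast_choose_two] at this
  linarith

section TwoSets

variable {V : Type*} [DecidableEq V]

lemma ite_disjoint_add_card_inter {e f : Finset V} (he : #e = 2) (hf : #f = 2) :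
    (if Disjoint e f then 1 else 0) + #(e ∩ f) = 1 + if e = f then 1 else 0 := by
  by_cases hef : e = f
  · subst hef
    have hne : e ≠ ∅ := by rintro rfl; simp at he
    simp [hne, he]
  by_cases hd : Disjoint e f
  · simp [hef, hd, disjoint_iff_inter_eq_empty.1 hd]
  · have hpos : 0 < #(e ∩ f) := card_pos.2 (not_disjoint_iff_nonempty_inter.1 hd)
    have hle : #(e ∩ f) ≤ 1 := by
      by_contra! h
      have hinter_e : e ∩ f = e := eq_of_subset_of_card_le inter_subset_left (by omega)
      have hinter_f : e ∩ f = f := eq_of_subset_of_card_le inter_subset_right (by omega)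
      exact hef (hinter_e.symm.trans hinter_f)
    simp only [hd, hef, if_false, zero_add, add_zero]
    omega

variable [Fintype V] {F : Finset (Finset V)}

lemma card_disjoint_add_sum_card_filter_mem_sq (hF : ∀ e ∈ F, #e = 2) :
    #{p ∈ F ×ˢ F | Disjoint p.1 p.2} + ∑ v, #{e ∈ F | v ∈ e} ^ 2 = #F ^ 2 + #F := by
  have hcount := sum_card_bipartiteBelow_sq F univ (fun e v => v ∈ e)
  simp only [bipartiteBelow] at hcount
  have hpair : ∀ p ∈ F ×ˢ F, ((if Disjoint p.1 p.2 then 1 else 0) + #{v | v ∈ p.1 ∧ v ∈ p.2})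
      = 1 + if p.1 = p.2 then 1 else 0 := fun p hp => by
    rw [mem_product] at hp
    convert ite_disjoint_add_card_inter (hF _ hp.1) (hF _ hp.2) using 3
    ext; simp
  rw [hcount, ← sum_product' (f := fun e f => #{v | v ∈ e ∧ v ∈ f}), card_filter,
    ← sum_add_distrib, sum_congr rfl hpair, sum_add_distrib, sum_const, card_product,
    smul_eq_mul, mul_one, sum_product]
  simp [sq]

lemma sum_card_filter_mem (hF : ∀ e ∈ F, #e = 2) : ∑ v, #{e ∈ F | v ∈ e} = 2 * #F := by
  have hcount := sum_card_bipartiteAbove_eq_sum_card_bipartiteBelow (s := F)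
    (t := univ) (r := fun e v => v ∈ e)
  simp only [bipartiteAbove, bipartiteBelow, filter_univ_mem] at hcount
  rw [← hcount, sum_congr rfl fun e he => ?_, sum_const, smul_eq_mul, mul_comm]
  simpa using hF e he

end TwoSets

lemma sum_sq_card_inter_sub_le {V : Type*} [Fintype V] [DecidableEq V] (hV : 4 ≤ Fintype.card V)
    {F : Finset (Finset V)} (hF : ∀ e ∈ F, #e = 2) :
    ∑ M ∈ perfectPairings V, ((#(F ∩ M) : ℝ) - #F / (Fintype.card V - 1)) ^ 2
      ≤ (#(perfectPairings V) : ℝ) * Fintype.card V := by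
  set μ : ℝ := #F / (Fintype.card V - 1)
  set N : ℝ := (#(perfectPairings V) : ℝ)
  have hKD : (#{p ∈ F ×ˢ F | Disjoint p.1 p.2} : ℝ) + ∑ v, (#{e ∈ F | v ∈ e} : ℝ) ^ 2
      = (#F : ℝ) ^ 2 + #F := by
    exact_mod_cast card_disjoint_add_sum_card_filter_mem_sq hF
  have hD : (2 * (#F : ℝ)) ^ 2 ≤ Fintype.card V * ∑ v, (#{e ∈ F | v ∈ e} : ℝ) ^ 2 := by
    have hsum : ∑ v, (#{e ∈ F | v ∈ e} : ℝ) = 2 * #F := by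
      exact_mod_cast sum_card_filter_mem hF
    simpa [hsum] using sq_sum_le_card_mul_sum_sq (s := univ)
      (f := fun v => (#{e ∈ F | v ∈ e} : ℝ))
  have hvar := div_add_div_sub_div_sq_le (by exact_mod_cast hV) (two_mul_card_le hF) hKD hD
  calc ∑ M ∈ perfectPairings V, ((#(F ∩ M) : ℝ) - μ) ^ 2
      = ∑ M ∈ perfectPairings V, (#(F ∩ M) : ℝ) ^ 2
          - 2 * μ * ∑ M ∈ perfectPairings V, (#(F ∩ M) : ℝ) + N * μ ^ 2 := by
        simp only [sub_sq, sum_add_distrib, sum_sub_distrib, ← sum_mul, ← mul_sum, sum_const,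
          nsmul_eq_mul, N]
        ring
    _ = N * (μ + #{p ∈ F ×ˢ F | Disjoint p.1 p.2}
          / ((Fintype.card V - 1) * (Fintype.card V - 3)) - μ ^ 2) := by
        rw [sum_card_inter_sq_perfectPairings hF, sum_card_inter_perfectPairings hF]
        ring
    _ ≤ N * Fintype.card V := mul_le_mul_of_nonneg_left hvar (Nat.cast_nonneg _)

theorem stmt_11_general {V : Type*} [Fintype V] [DecidableEq V]
    [MeasurableSpace (Finset (Finset V))] [MeasurableSingletonClass (Finset (Finset V))]
    (hcard : 4 ≤ Fintype.card V)
    (F : Finset (Finset V)) (hF2 : ∀ e ∈ F, e.card = 2)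
    (lam : ℝ) (hlam : 0 < lam) :
    (uniformOn {M : Finset (Finset V) | IsPerfectPairing M})
        {M : Finset (Finset V) |
          lam ≤ |((F ∩ M).card : ℝ) - (F.card : ℝ) / (Fintype.card V - 1)|}
      ≤ ENNReal.ofReal ((Fintype.card V : ℝ) / lam ^ 2) := by
  set X : Finset (Finset V) → ℝ := fun M => (#(F ∩ M) : ℝ) - #F / (Fintype.card V - 1)
  have hbad : (#{M ∈ perfectPairings V | lam ≤ |X M|} : ℝ)
      ≤ Fintype.card V / lam ^ 2 * #(perfectPairings V) := by
    rw [div_mul_eq_mul_div, le_div_iff₀ (by positivity), mul_comm (Fintype.card V : ℝ)]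
    exact (card_filter_le_abs_mul_sq_le_sum_sq _ X hlam.le).trans
      (sum_sq_card_inter_sub_le hcard hF2)
  have hPP : {M : Finset (Finset V) | IsPerfectPairing M} = (perfectPairings V : Set _) := by
    ext; simp
  have hX : {M : Finset (Finset V) | lam ≤ |X M|}
      = ((univ.filter fun M => lam ≤ |X M|) : Set _) := by
    ext; simp
  rw [hPP, hX, uniformOn_apply_finset, inter_filter, inter_univ]
  refine ENNReal.div_le_of_le_mul ?_
  rw [← ENNReal.ofReal_natCast, ← ENNReal.ofReal_natCast, ← ENNReal.ofReal_mul (by positivity)]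
  exact ENNReal.ofReal_le_ofReal hbad

/-- Let `X` be a finite set of even cardinality `|X| ≥ 4`, let `M` be a uniformly
random partition of `X` into pairs, and let `F` be any family of two-element subsets of
`X`.  For every `λ > 0`, the probability that `| |F ∩ M| - |F|/(|X|-1) | ≥ λ` is at
most `|X|/λ²`. -/
theorem stmt_11 {V : Type*} [Fintype V] [DecidableEq V]
    [MeasurableSpace (Finset (Finset V))] [MeasurableSingletonClass (Finset (Finset V))]
    (hcard : 4 ≤ Fintype.card V) (heven : Even (Fintype.card V))
    (F : Finset (Finset V)) (hF2 : ∀ e ∈ F, e.card = 2)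
    (lam : ℝ) (hlam : 0 < lam) :
    (uniformOn {M : Finset (Finset V) | IsPerfectPairing M})
        {M : Finset (Finset V) |
          lam ≤ |((F ∩ M).card : ℝ) - (F.card : ℝ) / (Fintype.card V - 1)|}
      ≤ ENNReal.ofReal ((Fintype.card V : ℝ) / lam ^ 2) :=
  stmt_11_general hcard F hF2 lam hlam
end

section
/- Let G be a graph, Z ⊆ V(G) a set, G' = G − Z, and suppose a = Σ_{z∈Z} deg_{Ḡ}(z) and every vertex of G has at most k non-neighbours. Then the number of bad triples — 3-sets T with exactly one vertex z ∈ T ∩ Z such that z is non-adjacent to both other vertices of T — is at most a(k−1)/2. -/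
/-- `T` is a bad triple with respect to `Z`: a 3-set containing exactly one vertex
`z ∈ Z`, which is non-adjacent in `G` to both other vertices of `T`. -/
def IsBadTriple {V : Type*} [DecidableEq V] (G : SimpleGraph V) (Z : Finset V) (T : Finset V) : Prop :=
  ∃ z u v : V, z ≠ u ∧ z ≠ v ∧ u ≠ v ∧ T = {z, u, v} ∧
    z ∈ Z ∧ u ∉ Z ∧ v ∉ Z ∧ ¬ G.Adj z u ∧ ¬ G.Adj z v

/-- Let `G` be a graph, `Z` a set of vertices, `a = Σ_{z ∈ Z} deg_Ḡ(z)`, and suppose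
every vertex of `G` has at most `k` non-neighbours.  Then the number of bad triples is
at most `a(k-1)/2`. -/
theorem stmt_16 {V : Type*} [Fintype V] [DecidableEq V]
    (G : SimpleGraph V) [DecidableRel G.Adj] (Z : Finset V) (k a : ℕ)
    (ha : a = ∑ z ∈ Z, Gᶜ.degree z)
    (hdeg : ∀ v : V, Gᶜ.degree v ≤ k) :
    2 * {T : Finset V | IsBadTriple G Z T}.ncard ≤ a * (k - 1) := by
  classical
  set S : Set (Finset V) := {T : Finset V | IsBadTriple G Z T}
  have hfin : S.ncard = S.toFinset.card := Set.ncard_eq_toFinset_card' S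
  have hsub : S.toFinset ⊆
      Z.biUnion (fun z => ((Gᶜ.neighborFinset z).powersetCard 2).image (insert z)) := by
    intro T hT
    rw [Set.mem_toFinset] at hT
    obtain ⟨z, u, v, hzu, hzv, huv, hTeq, hzZ, _, _, hnu, hnv⟩ := hT
    refine Finset.mem_biUnion.2 ⟨z, hzZ, Finset.mem_image.2 ⟨{u, v}, ?_, ?_⟩⟩
    · rw [Finset.mem_powersetCard]
      constructor
      · intro x hx
        simp only [Finset.mem_insert, Finset.mem_singleton] at hx
        rcases hx with rfl | rfl <;> rw [SimpleGraph.mem_neighborFinset, SimpleGraph.compl_adj]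
        · exact ⟨hzu, hnu⟩
        · exact ⟨hzv, hnv⟩
      · rw [Finset.card_insert_of_notMem (by simpa using huv), Finset.card_singleton]
    · rw [hTeq]
  have hcard : S.toFinset.card ≤ ∑ z ∈ Z, (Gᶜ.degree z).choose 2 := by
    calc S.toFinset.card
        ≤ (Z.biUnion (fun z => ((Gᶜ.neighborFinset z).powersetCard 2).image (insert z))).card :=
          Finset.card_le_card hsub
      _ ≤ ∑ z ∈ Z, (((Gᶜ.neighborFinset z).powersetCard 2).image (insert z)).card :=
          Finset.card_biUnion_le
      _ ≤ ∑ z ∈ Z, (Gᶜ.degree z).choose 2 := by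
          refine Finset.sum_le_sum fun z _ => ?_
          calc (((Gᶜ.neighborFinset z).powersetCard 2).image (insert z)).card
              ≤ ((Gᶜ.neighborFinset z).powersetCard 2).card := Finset.card_image_le
            _ = (Gᶜ.degree z).choose 2 := by
                rw [Finset.card_powersetCard, SimpleGraph.card_neighborFinset_eq_degree]
  rw [hfin, ha]
  calc 2 * S.toFinset.card ≤ 2 * ∑ z ∈ Z, (Gᶜ.degree z).choose 2 := by omega
    _ = ∑ z ∈ Z, 2 * (Gᶜ.degree z).choose 2 := Finset.mul_sum _ _ _
    _ ≤ ∑ z ∈ Z, Gᶜ.degree z * (k - 1) := by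
        refine Finset.sum_le_sum fun z _ => ?_
        have h1 : 2 * (Gᶜ.degree z).choose 2 ≤ Gᶜ.degree z * (Gᶜ.degree z - 1) := by
          rw [Nat.choose_two_right, Nat.mul_comm]
          exact Nat.div_mul_le_self _ 2
        have h2 : Gᶜ.degree z - 1 ≤ k - 1 := Nat.sub_le_sub_right (hdeg z) 1
        exact h1.trans (Nat.mul_le_mul_left _ h2)
    _ = (∑ z ∈ Z, Gᶜ.degree z) * (k - 1) := (Finset.sum_mul _ _ _).symm
end

section
/- For fixed z with 0 ≤ z ≤ 1/4, the function g(ζ) = z(1 − 4z)(z²(1 − 5z + 4z²) + ζ(4 − 13z + 12z²) + 4ζ²)/(1 + ζ − 3z + 2z²)² is nondecreasing in ζ on the interval 0 ≤ ζ ≤ z² ≤ 1/16. -/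
/-- For fixed `z ∈ [0, 1/4]`, the function
`g(ζ) = z(1 - 4z)(z²(1 - 5z + 4z²) + ζ(4 - 13z + 12z²) + 4ζ²)/(1 + ζ - 3z + 2z²)²`
is nondecreasing in `ζ` on `[0, z²]`. -/
theorem stmt_18 (z : ℝ) (hz0 : 0 ≤ z) (hz1 : z ≤ 1 / 4) :
    MonotoneOn
      (fun ζ : ℝ =>
        z * (1 - 4 * z) *
            (z ^ 2 * (1 - 5 * z + 4 * z ^ 2) + ζ * (4 - 13 * z + 12 * z ^ 2) +
              4 * ζ ^ 2) /
          (1 + ζ - 3 * z + 2 * z ^ 2) ^ 2)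
      (Set.Icc 0 (z ^ 2)) := by
  intro a ha b hb hab
  obtain ⟨ha0, ha1⟩ := ha
  obtain ⟨hb0, hb1⟩ := hb
  have hA : (0:ℝ) ≤ z * (1 - 4 * z) := mul_nonneg hz0 (by linarith)
  have hDa : (0:ℝ) < 1 + a - 3 * z + 2 * z ^ 2 := by nlinarith
  have hDb : (0:ℝ) < 1 + b - 3 * z + 2 * z ^ 2 := by nlinarith
  simp only
  rw [div_le_div_iff₀ (pow_pos hDa 2) (pow_pos hDb 2)]
  have hg : (0:ℝ) ≤ 4 - 24*z + 51*z^2 - 43*z^3 + 12*z^4 := by nlinarith [sq_nonneg z, sq_nonneg (z - 1/4), sq_nonneg (z^2 - z)]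
  have hf : (0:ℝ) ≤ 4 - 37*z + 140*z^2 - 273*z^3 + 286*z^4 - 152*z^5 + 32*z^6 := by
    nlinarith [sq_nonneg z, sq_nonneg (z - 1/4), mul_nonneg (mul_nonneg hz0 hz0) hz0, sq_nonneg (z^2 - z), sq_nonneg (z^3 - z^2)]
  have hc : (0:ℝ) ≤ 4 - 11*z + 4*z^2 := by nlinarith
  have hQ : (0:ℝ) ≤ b * ((4 - 24*z + 51*z^2 - 43*z^3 + 12*z^4) + a * (4 - 11*z + 4*z^2))
      + (4 - 37*z + 140*z^2 - 273*z^3 + 286*z^4 - 152*z^5 + 32*z^6)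
      + a * (4 - 24*z + 51*z^2 - 43*z^3 + 12*z^4) := by
    have := mul_nonneg ha0 hc
    have := mul_nonneg hb0 (add_nonneg hg (mul_nonneg ha0 hc))
    have := mul_nonneg ha0 hg
    linarith
  have hba : (0:ℝ) ≤ b - a := by linarith
  nlinarith [mul_nonneg (mul_nonneg hA hba) hQ]
end
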